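/- Let 0 < η < 1 and let J₁, …, J_L (L ≥ 1) be pairwise disjoint subintervals of a bounded interval J ⊂ ℝ. Suppose that for every subinterval K ⊆ J that is a union of at least one of the J_l's, there exists an index l with J_l ⊆ K and |J_l| ≥ η·|K|. Then there exist a point t̄ ∈ J, an integer K ≥ −log(L)/(2·log(η/8)), and indices l₁, …, l_K such that |J_{l₁}| ≥ 2|J_{l₂}| ≥ 4|J_{l₃}| ≥ … ≥ 2^{K-1}|J_{l_K}| and dist(t̄, J_{l_k}) ≤ η^{-1}·|J_{l_k}| for every k = 1, …, K. -/

import Mathlib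

/-!
Greedy descent. In a window `[c, d]` the hypothesis yields a member `J_l` with
`ℓ = |J_l| ≥ η (d - c)`. Sorting the members of the window by the cell of width `ℓ / 4` that
holds their left endpoint, one of the at most `4 / η + 1` cells holds an `η / 5` share of them, and
by disjointness all but one of those lie in a window of length `ℓ / 2` starting at that cell.
That window misses `J_l`, so recursing into it picks members of at least halving lengths, while
the number of members in the window drops by a factor of at most `(8 / η) ^ 2` per step. All
windows are nested in `[c, d]`, whose length is at most `η⁻¹ ℓ`, so any point of the last window
is close to every chosen member. Starting from all `L` members the recursion lasts at least
`log L / (2 log (8 / η))` steps.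
-/

open Real
open Set

theorem Finset.exists_card_le_mul_card_filter_Ico {α : Type*} (s : Finset α) (x : α → ℝ)
    {c d w : ℝ} (hcd : c ≤ d) (hw : 0 < w) (hs : ∀ i ∈ s, x i ∈ Set.Icc c d) :
    ∃ u ∈ Set.Icc c d,
      (s.card : ℝ) ≤ ((d - c) / w + 1) * (s.filter fun i => x i ∈ Set.Ico u (u + w)).card := by
  classical
  set N := ⌊(d - c) / w⌋₊ + 1
  have hmaps : ∀ i ∈ s, ⌊(x i - c) / w⌋₊ ∈ Finset.range N := fun i hi => by
    have := hs i hi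
    simp only [Finset.mem_range, N, Nat.lt_succ_iff]
    exact Nat.floor_mono (by gcongr; exact this.2)
  obtain ⟨j, hj, hfiber⟩ := Finset.exists_le_card_fiber_of_nsmul_le_card_of_maps_to hmaps
    Finset.nonempty_range_add_one (b := (s.card : ℝ) / N) (by
      rw [Finset.card_range, nsmul_eq_mul, mul_div_cancel₀]; positivity)
  have hN : (N : ℝ) ≤ (d - c) / w + 1 := by
    simp only [N, Nat.cast_add, Nat.cast_one, add_le_add_iff_right]
    exact Nat.floor_le (div_nonneg (sub_nonneg.2 hcd) hw.le)
  have hj' : (j : ℝ) * w ≤ d - c := by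
    rw [← le_div_iff₀ hw]
    have : (j : ℝ) + 1 ≤ N := by exact_mod_cast Finset.mem_range.1 hj
    linarith
  refine ⟨c + j * w, ⟨le_add_of_nonneg_right (by positivity), by linarith⟩, ?_⟩
  have hsub : (s.filter fun i => ⌊(x i - c) / w⌋₊ = j) ⊆
      s.filter fun i => x i ∈ Set.Ico (c + j * w) (c + j * w + w) := by
    intro i hi
    rw [Finset.mem_filter] at hi ⊢
    have hci : 0 ≤ (x i - c) / w := div_nonneg (sub_nonneg.2 (hs i hi.1).1) hw.le
    obtain ⟨h1, h2⟩ := (Nat.floor_eq_iff hci).1 hi.2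
    rw [le_div_iff₀ hw] at h1
    rw [div_lt_iff₀ hw] at h2
    exact ⟨hi.1, by linarith, by linarith⟩
  calc (s.card : ℝ) = N * (s.card / N) := (mul_div_cancel₀ _ (by positivity)).symm
    _ ≤ ((d - c) / w + 1) * (s.filter fun i => ⌊(x i - c) / w⌋₊ = j).card := by gcongr
    _ ≤ _ := by gcongr

namespace IntervalConcentration

variable {ι : Type*} [Fintype ι] {a b : ι → ℝ}

variable (a b) in
noncomputable def inside (c d : ℝ) : Finset ι :=
  Finset.univ.filter fun l => c ≤ a l ∧ b l ≤ d

theorem mem_inside {l : ι} {c d : ℝ} : l ∈ inside a b c d ↔ c ≤ a l ∧ b l ≤ d := by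
  simp [inside]

theorem inside_mono {c d u v : ℝ} (hcu : c ≤ u) (hvd : v ≤ d) :
    inside a b u v ⊆ inside a b c d := fun _ hl =>
  mem_inside.2 ⟨hcu.trans (mem_inside.1 hl).1, (mem_inside.1 hl).2.trans hvd⟩

theorem card_inside_self_le_one (hab : ∀ l, a l ≤ b l)
    (hdisj : Pairwise fun l l' => Disjoint (Icc (a l) (b l)) (Icc (a l') (b l'))) (c : ℝ) :
    (inside a b c c).card ≤ 1 := by
  refine Finset.card_le_one.2 fun i hi j hj => hdisj.eq (not_disjoint_iff.2 ⟨c, ?_, ?_⟩)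
  · have := mem_inside.1 hi; have := hab i; exact ⟨by linarith, by linarith⟩
  · have := mem_inside.1 hj; have := hab j; exact ⟨by linarith, by linarith⟩

theorem card_cell_le
    (hdisj : Pairwise fun l l' => Disjoint (Icc (a l) (b l)) (Icc (a l') (b l')))
    {c d u w : ℝ} :
    ((inside a b c d).filter fun l => a l ∈ Ico u (u + w)).card ≤
      (inside a b u (min d (u + 2 * w))).card + 1 := by
  classical
  set F := (inside a b c d).filter fun l => a l ∈ Ico u (u + w)
  have hlong : (F.filter fun l => u + w ∈ Icc (a l) (b l)).card ≤ 1 :=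
    Finset.card_le_one.2 fun i hi j hj =>
      hdisj.eq (not_disjoint_iff.2 ⟨u + w, (Finset.mem_filter.1 hi).2, (Finset.mem_filter.1 hj).2⟩)
  -- a member of the cell sticking out of the window contains `u + w`
  have hsplit : F ⊆ inside a b u (min d (u + 2 * w)) ∪
      F.filter fun l => u + w ∈ Icc (a l) (b l) := by
    intro l hl
    obtain ⟨hin, hu, hlt⟩ := Finset.mem_filter.1 hl
    have hbd := (mem_inside.1 hin).2
    rw [Finset.mem_union, Finset.mem_filter, mem_inside]
    by_cases hb : b l ≤ u + 2 * w
    · exact .inl ⟨hu, le_min hbd hb⟩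
    · exact .inr ⟨hl, hlt.le, by linarith⟩
  calc F.card ≤ _ := Finset.card_le_card hsplit
    _ ≤ _ := Finset.card_union_le _ _
    _ ≤ _ := by gcongr

theorem exists_window_card_le (hab : ∀ l, a l ≤ b l)
    (hdisj : Pairwise fun l l' => Disjoint (Icc (a l) (b l)) (Icc (a l') (b l')))
    {c d w : ℝ} (hcd : c ≤ d) (hw : 0 < w) :
    ∃ u v, c ≤ u ∧ u ≤ v ∧ v ≤ d ∧ v - u ≤ 2 * w ∧
      ((inside a b c d).card : ℝ) ≤ ((d - c) / w + 1) * ((inside a b u v).card + 1) := by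
  have hmem : ∀ l ∈ inside a b c d, a l ∈ Icc c d := fun l hl =>
    ⟨(mem_inside.1 hl).1, (hab l).trans (mem_inside.1 hl).2⟩
  obtain ⟨u, ⟨hcu, hud⟩, hcard⟩ :=
    (inside a b c d).exists_card_le_mul_card_filter_Ico a hcd hw hmem
  refine ⟨u, min d (u + 2 * w), hcu, le_min hud (by linarith), min_le_left _ _,
    by linarith [min_le_right d (u + 2 * w)], hcard.trans ?_⟩
  have := card_cell_le hdisj (c := c) (d := d) (u := u) (w := w)
  gcongr
  exact_mod_cast this

theorem le_sq_mul_of_le_mul {η m n : ℝ} (hη0 : 0 < η) (hη1 : η ≤ 1) (hm : (8 / η) ^ 2 < m)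
    (h : m ≤ (4 / η + 1) * (n + 1)) : m ≤ (8 / η) ^ 2 * n := by
  obtain ⟨x, hx, rfl⟩ : ∃ x, 1 ≤ x ∧ η = x⁻¹ :=
    ⟨η⁻¹, one_le_inv₀ hη0 |>.2 hη1, (inv_inv η).symm⟩
  simp only [div_inv_eq_mul] at hm h ⊢
  have hn1 : 0 < n + 1 := by nlinarith
  have h5 : m ≤ 5 * x * (n + 1) := by nlinarith
  have hn : 1 ≤ n := by nlinarith
  nlinarith

theorem one_lt_eight_div_sq {η : ℝ} (hη0 : 0 < η) (hη1 : η ≤ 1) : 1 < (8 / η) ^ 2 := by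
  have : 1 < 8 / η := by rw [lt_div_iff₀ hη0]; linarith
  nlinarith

theorem exists_descent {η : ℝ} (hη0 : 0 < η) (hη1 : η ≤ 1) (hab : ∀ l, a l ≤ b l)
    (hdisj : Pairwise fun l l' => Disjoint (Icc (a l) (b l)) (Icc (a l') (b l')))
    {c d : ℝ} {l : ι} (hl : l ∈ inside a b c d) (hlen : η * (d - c) ≤ b l - a l)
    (hm : (8 / η) ^ 2 < (inside a b c d).card) :
    ∃ u v, c ≤ u ∧ u ≤ v ∧ v ≤ d ∧ 2 * (v - u) ≤ b l - a l ∧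
      (inside a b u v).card < (inside a b c d).card ∧
      ((inside a b c d).card : ℝ) ≤ (8 / η) ^ 2 * (inside a b u v).card := by
  obtain ⟨hcl, hld⟩ := mem_inside.1 hl
  have hpos : 0 < b l - a l := by
    by_contra! hle
    obtain rfl : d = c := by nlinarith [hab l]
    have : ((inside a b d d).card : ℝ) ≤ 1 := mod_cast card_inside_self_le_one hab hdisj d
    linarith [one_lt_eight_div_sq hη0 hη1]
  obtain ⟨u, v, hcu, huv, hvd, hvu, hcard⟩ :=
    exists_window_card_le (c := c) (d := d) hab hdisj (by linarith [hab l])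
      (by positivity : 0 < (b l - a l) / 4)
  refine ⟨u, v, hcu, huv, hvd, by linarith, Finset.card_lt_card ?_,
    le_sq_mul_of_le_mul hη0 hη1 hm ?_⟩
  · refine Finset.ssubset_iff_subset_ne.2 ⟨inside_mono hcu hvd, fun h => ?_⟩
    have := mem_inside.1 (h ▸ hl)
    linarith
  · refine hcard.trans (mul_le_mul_of_nonneg_right ?_ (by positivity))
    rw [add_le_add_iff_right, div_div_eq_mul_div, div_le_div_iff₀ hpos hη0]
    linarith

variable (a b) in
structure IsConcentrationChain (η c d t : ℝ) (ls : List ι) : Prop where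
  mem_Icc : t ∈ Icc c d
  mem_window : ∀ l ∈ ls, l ∈ inside a b c d
  halving : ls.IsChain fun i j => 2 * (b j - a j) ≤ b i - a i
  infDist_le : ∀ l ∈ ls, Metric.infDist t (Icc (a l) (b l)) ≤ η⁻¹ * (b l - a l)

namespace IsConcentrationChain

variable {η c d t : ℝ} {ls : List ι}

theorem nil (h : t ∈ Icc c d) : IsConcentrationChain a b η c d t [] :=
  ⟨h, by simp, .nil, by simp⟩

theorem mono {u v : ℝ} (h : IsConcentrationChain a b η u v t ls) (hcu : c ≤ u) (hvd : v ≤ d) :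
    IsConcentrationChain a b η c d t ls where
  mem_Icc := ⟨hcu.trans h.mem_Icc.1, h.mem_Icc.2.trans hvd⟩
  mem_window l hl := inside_mono hcu hvd (h.mem_window l hl)
  halving := h.halving
  infDist_le := h.infDist_le

theorem cons (h : IsConcentrationChain a b η c d t ls) (hη0 : 0 < η) {l : ι} (hab : a l ≤ b l)
    (hl : l ∈ inside a b c d) (hlen : η * (d - c) ≤ b l - a l)
    (hhead : ∀ j ∈ ls, 2 * (b j - a j) ≤ b l - a l) :
    IsConcentrationChain a b η c d t (l :: ls) where
  mem_Icc := h.mem_Icc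
  mem_window := List.forall_mem_cons.2 ⟨hl, h.mem_window⟩
  halving := h.halving.cons fun j hj => hhead j (List.mem_of_mem_head? hj)
  infDist_le := by
    refine List.forall_mem_cons.2 ⟨?_, h.infDist_le⟩
    obtain ⟨hcl, hld⟩ := mem_inside.1 hl
    obtain ⟨hct, htd⟩ := h.mem_Icc
    calc Metric.infDist t (Icc (a l) (b l)) ≤ dist t (a l) :=
          Metric.infDist_le_dist_of_mem (left_mem_Icc.2 hab)
      _ ≤ d - c := by rw [dist_comm, Real.dist_eq, abs_le]; constructor <;> linarith
      _ ≤ η⁻¹ * (b l - a l) := by rw [inv_mul_eq_div, le_div_iff₀' hη0]; exact hlen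

end IsConcentrationChain

theorem exists_concentrationChain {η A B : ℝ} (hη0 : 0 < η) (hη1 : η ≤ 1) (hab : ∀ l, a l ≤ b l)
    (hdisj : Pairwise fun l l' => Disjoint (Icc (a l) (b l)) (Icc (a l') (b l')))
    (hprop : ∀ c d : ℝ, c ≤ d → Icc c d ⊆ Icc A B → (∃ l, Icc (a l) (b l) ⊆ Icc c d) →
      ∃ l, Icc (a l) (b l) ⊆ Icc c d ∧ η * (d - c) ≤ b l - a l)
    {c d : ℝ} (hcd : c ≤ d) (hAB : Icc c d ⊆ Icc A B) :
    ∃ t ls, ((inside a b c d).card : ℝ) ≤ (8 / η) ^ (2 * ls.length) ∧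
      IsConcentrationChain a b η c d t ls := by
  induction hm : (inside a b c d).card using Nat.strong_induction_on generalizing c d with
  | _ m ih =>
  obtain hempty | ⟨l₀, hl₀⟩ := (inside a b c d).eq_empty_or_nonempty
  · exact ⟨c, [], by simp [← hm, hempty], .nil ⟨le_rfl, hcd⟩⟩
  have hIcc : ∀ l, Icc (a l) (b l) ⊆ Icc c d ↔ l ∈ inside a b c d := fun l =>
    (Icc_subset_Icc_iff (hab l)).trans mem_inside.symm
  obtain ⟨l, hl, hlen⟩ := hprop c d hcd hAB ⟨l₀, (hIcc l₀).2 hl₀⟩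
  rw [hIcc] at hl
  have hal : a l ∈ Icc c d := ⟨(mem_inside.1 hl).1, (hab l).trans (mem_inside.1 hl).2⟩
  by_cases hsmall : (m : ℝ) ≤ (8 / η) ^ 2
  · exact ⟨a l, [l], by simpa using hsmall,
      (IsConcentrationChain.nil hal).cons hη0 (hab l) hl hlen (by simp)⟩
  obtain ⟨u, v, hcu, huv, hvd, hvu, hlt, hle⟩ :=
    exists_descent hη0 hη1 hab hdisj hl hlen (hm ▸ not_le.1 hsmall)
  obtain ⟨t, ls, hcard, hchain⟩ := ih _ (hm ▸ hlt) huv ((Icc_subset_Icc hcu hvd).trans hAB) rfl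
  refine ⟨t, l :: ls, ?_, (hchain.mono hcu hvd).cons hη0 (hab l) hl hlen fun j hj => ?_⟩
  · calc (m : ℝ) ≤ (8 / η) ^ 2 * (inside a b u v).card := hm ▸ hle
      _ ≤ (8 / η) ^ 2 * (8 / η) ^ (2 * ls.length) := by gcongr
      _ = (8 / η) ^ (2 * (l :: ls).length) := by
        rw [List.length_cons, ← pow_add]; ring_nf
  · obtain ⟨huj, hjv⟩ := mem_inside.1 (hchain.mem_window j hj)
    linarith

theorem neg_log_div_le_of_le_pow {η x : ℝ} (hη0 : 0 < η) (hη8 : η < 8) (hx : 0 ≤ x) {K : ℕ}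
    (h : x ≤ (8 / η) ^ (2 * K)) : -log x / (2 * log (η / 8)) ≤ K := by
  have hlog : 0 < log (8 / η) := log_pos (by rw [lt_div_iff₀ hη0]; linarith)
  rw [← inv_div 8 η, log_inv, mul_neg, neg_div_neg_eq, div_le_iff₀ (by positivity)]
  obtain rfl | hx := hx.eq_or_lt
  · simp only [log_zero]; positivity
  calc log x ≤ log ((8 / η) ^ (2 * K)) := log_le_log hx h
    _ = K * (2 * log (8 / η)) := by rw [log_pow]; push_cast; ring

end IntervalConcentration

open IntervalConcentration

theorem stmt_17_general (η : ℝ) (hη0 : 0 < η) (hη1 : η < 1)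
    (L : ℕ) (A B : ℝ) (hAB : A ≤ B)
    (a b : Fin L → ℝ) (hab : ∀ l, a l ≤ b l)
    (hsub : ∀ l, Set.Icc (a l) (b l) ⊆ Set.Icc A B)
    (hdisj : Pairwise fun l l' => Disjoint (Set.Icc (a l) (b l)) (Set.Icc (a l') (b l')))
    (hprop : ∀ c d : ℝ, c ≤ d → Set.Icc c d ⊆ Set.Icc A B →
      (∃ l, Set.Icc (a l) (b l) ⊆ Set.Icc c d) →
      ∃ l, Set.Icc (a l) (b l) ⊆ Set.Icc c d ∧ η * (d - c) ≤ b l - a l) :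
    ∃ (tbar : ℝ) (_ : tbar ∈ Set.Icc A B) (K : ℕ) (ls : Fin K → Fin L),
      -(Real.log L) / (2 * Real.log (η / 8)) ≤ (K : ℝ) ∧
      (∀ (k : ℕ) (hk : k + 1 < K),
        2 * (b (ls ⟨k + 1, hk⟩) - a (ls ⟨k + 1, hk⟩)) ≤
          b (ls ⟨k, Nat.lt_of_succ_lt hk⟩) - a (ls ⟨k, Nat.lt_of_succ_lt hk⟩)) ∧
      (∀ k : Fin K, Metric.infDist tbar (Set.Icc (a (ls k)) (b (ls k))) ≤
        η⁻¹ * (b (ls k) - a (ls k))) := by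
  obtain ⟨t, ls, hcard, hchain⟩ :=
    exists_concentrationChain hη0 hη1.le hab hdisj hprop hAB subset_rfl
  have hall : inside a b A B = Finset.univ :=
    Finset.eq_univ_of_forall fun l => mem_inside.2 ((Icc_subset_Icc_iff (hab l)).1 (hsub l))
  rw [hall, Finset.card_univ, Fintype.card_fin] at hcard
  refine ⟨t, hchain.mem_Icc, ls.length, fun k => ls[k], ?_, fun k hk => hchain.halving.getElem k hk,
    fun k => hchain.infDist_le _ (List.getElem_mem _)⟩
  exact neg_log_div_le_of_le_pow hη0 (by linarith) L.cast_nonneg hcard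

theorem stmt_17 (η : ℝ) (hη0 : 0 < η) (hη1 : η < 1)
    (L : ℕ) (hL : 1 ≤ L) (A B : ℝ) (hAB : A ≤ B)
    (a b : Fin L → ℝ) (hab : ∀ l, a l ≤ b l)
    (hsub : ∀ l, Set.Icc (a l) (b l) ⊆ Set.Icc A B)
    (hdisj : Pairwise fun l l' => Disjoint (Set.Icc (a l) (b l)) (Set.Icc (a l') (b l')))
    (hprop : ∀ c d : ℝ, c ≤ d → Set.Icc c d ⊆ Set.Icc A B →
      (∃ l, Set.Icc (a l) (b l) ⊆ Set.Icc c d) →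
      ∃ l, Set.Icc (a l) (b l) ⊆ Set.Icc c d ∧ η * (d - c) ≤ b l - a l) :
    ∃ (tbar : ℝ) (_ : tbar ∈ Set.Icc A B) (K : ℕ) (ls : Fin K → Fin L),
      -(Real.log L) / (2 * Real.log (η / 8)) ≤ (K : ℝ) ∧
      (∀ (k : ℕ) (hk : k + 1 < K),
        2 * (b (ls ⟨k + 1, hk⟩) - a (ls ⟨k + 1, hk⟩)) ≤
          b (ls ⟨k, Nat.lt_of_succ_lt hk⟩) - a (ls ⟨k, Nat.lt_of_succ_lt hk⟩)) ∧
      (∀ k : Fin K, Metric.infDist tbar (Set.Icc (a (ls k)) (b (ls k))) ≤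
        η⁻¹ * (b (ls k) - a (ls k))) :=
  stmt_17_general η hη0 hη1 L A B hAB a b hab hsub hdisj hprop
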